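/- (S-lemma, converse direction) Suppose Θ ≻ 0 is positive definite Hermitian. If (ĥ+e)ᴴ G (ĥ+e) ≥ γσ² for every e ∈ ℂ^N with eᴴΘe ≤ 1, then there exists λ ≥ 0 such that the block matrix [[G + λΘ, Gĥ],[ĥᴴG, ĥᴴGĥ − γσ² − λ]] is positive semidefinite. -/

import Mathlib

open Matrix
open scoped ComplexOrder

/-
Homogenization: for v = (e, t) the Hermitian form of
`A = [[G, Gĥ], [ĥᴴG, ĥᴴGĥ - γσ²]]` is `(e + t ĥ)ᴴ G (e + t ĥ) - γσ² |t|²`, and that of `B = diag(Θ, -1)`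
is `eᴴΘe - |t|²`. Rescaling to `t = 1` (and using `Θ ≻ 0` when `t = 0`) turns the robustness
hypothesis into "`vᴴBv ≤ 0 → vᴴAv ≥ 0`", while `B` is negative at `(0, 1)`. The complex S-lemma
then yields `λ ≥ 0` with `A + λB ⪰ 0`, which is the block matrix of the claim.

For the S-lemma, the joint range `{(vᴴAv, vᴴBv)}` of two Hermitian forms is a convex cone: to add
the values at `v` and `w`, take `z₁ v + z₂ w` with `|z₁|² = 1 + x`, `|z₂|² = 1 - x`, `z̄₁ z₂ = c`,
where `(x, c) ∈ ℝ × ℂ` is a unit solution of the two real linear equations cancelling the cross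
terms (three unknowns, two equations). Separating this cone from the open negative quadrant by a
line gives weights `α, β ≥ 0` with `α vᴴAv + β vᴴBv ≥ 0`, and the Slater point forces `α > 0`.
-/

open Complex ComplexConjugate

namespace Matrix

variable {n : Type*} [Fintype n]

def reQuadForm (A : Matrix n n ℂ) (v : n → ℂ) : ℝ := (star v ⬝ᵥ A *ᵥ v).re

theorem reQuadForm_smul (A : Matrix n n ℂ) (c : ℂ) (v : n → ℂ) :
    A.reQuadForm (c • v) = normSq c * A.reQuadForm v := by
  have h : star (c • v) ⬝ᵥ A *ᵥ (c • v) = (normSq c : ℂ) * (star v ⬝ᵥ A *ᵥ v) := by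
    simp only [star_smul, mulVec_smul, smul_dotProduct, dotProduct_smul, smul_eq_mul, star_def,
      ← mul_conj]
    ring
  simp only [reQuadForm, h, re_ofReal_mul]

theorem reQuadForm_smul_add_smul (A : Matrix n n ℂ) (z₁ z₂ : ℂ) (v w : n → ℂ) :
    A.reQuadForm (z₁ • v + z₂ • w) = normSq z₁ * A.reQuadForm v + normSq z₂ * A.reQuadForm w +
      (conj z₁ * z₂ * (star v ⬝ᵥ A *ᵥ w + conj (star w ⬝ᵥ A *ᵥ v))).re := by
  have h : star (z₁ • v + z₂ • w) ⬝ᵥ A *ᵥ (z₁ • v + z₂ • w) =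
      normSq z₁ * (star v ⬝ᵥ A *ᵥ v) + normSq z₂ * (star w ⬝ᵥ A *ᵥ w) +
      (conj z₁ * z₂ * (star v ⬝ᵥ A *ᵥ w) + conj (conj z₁ * z₂ * conj (star w ⬝ᵥ A *ᵥ v))) := by
    simp only [star_add, star_smul, mulVec_add, mulVec_smul, add_dotProduct, dotProduct_add,
      smul_dotProduct, dotProduct_smul, smul_eq_mul, star_def, ← mul_conj, map_mul, conj_conj]
    ring
  simp only [reQuadForm, h, mul_add, add_re, re_ofReal_mul, conj_re]

theorem reQuadForm_add_smul (A B : Matrix n n ℂ) (r : ℝ) (v : n → ℂ) :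
    (A + (r : ℂ) • B).reQuadForm v = A.reQuadForm v + r * B.reQuadForm v := by
  simp only [reQuadForm, add_mulVec, smul_mulVec, dotProduct_add, dotProduct_smul,
    smul_eq_mul, add_re, re_ofReal_mul]

theorem IsHermitian.star_mulVec_dotProduct {α : Type*} [CommSemiring α] [StarRing α]
    {A : Matrix n n α} (hA : A.IsHermitian) (v w : n → α) :
    star (A *ᵥ v) ⬝ᵥ w = star v ⬝ᵥ A *ᵥ w := by
  rw [star_mulVec, hA.eq, dotProduct_mulVec]

theorem IsHermitian.posSemidef_of_reQuadForm_nonneg {A : Matrix n n ℂ} (hA : A.IsHermitian)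
    (h : ∀ v, 0 ≤ A.reQuadForm v) : A.PosSemidef := by
  refine .of_dotProduct_mulVec_nonneg hA fun v => ?_
  rw [Complex.nonneg_iff]
  exact ⟨h v, (hA.im_star_dotProduct_mulVec_self v).symm⟩

theorem PosDef.reQuadForm_pos {A : Matrix n n ℂ} (hA : A.PosDef) {v : n → ℂ} (hv : v ≠ 0) :
    0 < A.reQuadForm v :=
  (Complex.lt_def.mp (hA.dotProduct_mulVec_pos hv)).1

end Matrix

theorem exists_normSq_eq_and_conj_mul_eq {a b : ℝ} {c : ℂ} (ha : 0 ≤ a) (hb : 0 ≤ b)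
    (habc : a * b = normSq c) : ∃ z₁ z₂ : ℂ, normSq z₁ = a ∧ normSq z₂ = b ∧ conj z₁ * z₂ = c := by
  rcases ha.eq_or_lt with rfl | ha
  · refine ⟨0, Real.sqrt b, by simp, by simp [normSq_ofReal, Real.mul_self_sqrt hb], ?_⟩
    rw [map_zero, zero_mul, eq_comm, ← normSq_eq_zero]
    linarith
  · have hsa : (Real.sqrt a : ℂ) ≠ 0 := ofReal_ne_zero.mpr (Real.sqrt_pos.mpr ha).ne'
    refine ⟨Real.sqrt a, c / Real.sqrt a, by simp [normSq_ofReal, Real.mul_self_sqrt ha.le], ?_, ?_⟩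
    · rw [normSq_div, normSq_ofReal, Real.mul_self_sqrt ha.le, ← habc]; field_simp
    · rw [conj_ofReal]; field_simp

theorem exists_sq_add_normSq_eq_one_and_eq_zero (a₁ a₂ : ℝ) (d₁ d₂ : ℂ) :
    ∃ (x : ℝ) (c : ℂ), x ^ 2 + normSq c = 1 ∧
      a₁ * x + (c * d₁).re = 0 ∧ a₂ * x + (c * d₂).re = 0 := by
  let L : ℝ × ℂ →ₗ[ℝ] ℝ × ℝ :=
    { toFun := fun p => (a₁ * p.1 + (p.2 * d₁).re, a₂ * p.1 + (p.2 * d₂).re)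
      map_add' := fun p q => by
        ext <;> simp only [Prod.fst_add, Prod.snd_add, add_mul, add_re] <;> ring
      map_smul' := fun r p => by
        ext <;> simp only [Prod.smul_fst, Prod.smul_snd, smul_eq_mul, real_smul, mul_assoc,
          re_ofReal_mul, RingHom.id_apply] <;> ring }
  have hdim : Module.finrank ℝ (ℝ × ℝ) < Module.finrank ℝ (ℝ × ℂ) := by
    simp [Module.finrank_prod, finrank_real_complex]
  obtain ⟨p, hp, hp0⟩ :=
    Submodule.exists_mem_ne_zero_of_ne_bot (LinearMap.ker_ne_bot_of_finrank_lt (f := L) hdim)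
  have hpos : 0 < p.1 ^ 2 + normSq p.2 := by
    refine lt_of_le_of_ne (add_nonneg (sq_nonneg _) (normSq_nonneg _)) fun h => hp0 ?_
    have h₂ : normSq p.2 = 0 := by linarith [sq_nonneg p.1, normSq_nonneg p.2]
    exact Prod.ext (pow_eq_zero_iff two_ne_zero |>.mp (by linarith)) (normSq_eq_zero.mp h₂)
  set r := Real.sqrt (p.1 ^ 2 + normSq p.2)
  have hr : 0 < r := Real.sqrt_pos.mpr hpos
  have hLp : L (r⁻¹ • p) = 0 := by rw [map_smul, LinearMap.mem_ker.mp hp, smul_zero]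
  refine ⟨r⁻¹ * p.1, r⁻¹ • p.2, ?_, congrArg Prod.fst hLp, congrArg Prod.snd hLp⟩
  have hr2 : r ^ 2 = p.1 ^ 2 + normSq p.2 := Real.sq_sqrt hpos.le
  rw [real_smul, normSq_mul, normSq_ofReal]
  field_simp
  linarith

theorem PointedCone.exists_nonneg_weights_of_forall_not_neg (K : PointedCone ℝ (ℝ × ℝ))
    (hK : ∀ p ∈ K, ¬ (p.1 < 0 ∧ p.2 < 0)) :
    ∃ α β : ℝ, 0 ≤ α ∧ 0 ≤ β ∧ 0 < α + β ∧ ∀ p ∈ K, 0 ≤ α * p.1 + β * p.2 := by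
  obtain ⟨f, u, hfQ, hfK⟩ := geometric_hahn_banach_open ((convex_Iio 0).prod (convex_Iio 0))
    (isOpen_Iio.prod isOpen_Iio) K.convex
    (Set.disjoint_left.mpr fun p hpQ hpK => hK p hpK hpQ)
  have hu : u ≤ 0 := by simpa using hfK 0 K.zero_mem
  have hf_closure : ∀ p ∈ closure (Set.Iio 0 ×ˢ Set.Iio 0), f p ≤ 0 :=
    fun p hp => closure_minimal (fun q hq => ((hfQ q hq).trans_le hu).le)
      (isClosed_le f.continuous continuous_const) hp
  rw [closure_prod_eq, closure_Iio] at hf_closure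
  have hf : ∀ p : ℝ × ℝ, f p = f (1, 0) * p.1 + f (0, 1) * p.2 := by
    intro p
    have hp : p = p.1 • ((1, 0) : ℝ × ℝ) + p.2 • (0, 1) := by ext <;> simp
    conv_lhs => rw [hp]
    rw [map_add, map_smul, map_smul, smul_eq_mul, smul_eq_mul, mul_comm, mul_comm p.2]
  refine ⟨f (1, 0), f (0, 1), ?_, ?_, ?_, fun p hp => ?_⟩
  · have := hf_closure (-1, 0) ⟨by simp, by simp⟩
    rw [hf] at this
    linarith
  · have := hf_closure (0, -1) ⟨by simp, by simp⟩
    rw [hf] at this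
    linarith
  · have := hfQ (-1, -1) ⟨by simp, by simp⟩
    rw [hf] at this
    linarith
  · rw [← hf]
    by_contra! hfp
    have ht : 0 < (u - 1) / f p := div_pos_of_neg_of_neg (by linarith) hfp
    have hmem : ((u - 1) / f p) • p ∈ K := K.smul_mem ht.le hp
    have := hfK _ hmem
    rw [map_smul, smul_eq_mul, div_mul_cancel₀ _ hfp.ne] at this
    linarith

namespace Matrix

variable {n : Type*} [Fintype n]

theorem exists_reQuadForm_eq_add (A B : Matrix n n ℂ) (v w : n → ℂ) :
    ∃ u, A.reQuadForm u = A.reQuadForm v + A.reQuadForm w ∧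
      B.reQuadForm u = B.reQuadForm v + B.reQuadForm w := by
  obtain ⟨x, c, hunit, hA, hB⟩ := exists_sq_add_normSq_eq_one_and_eq_zero
    (A.reQuadForm v - A.reQuadForm w) (B.reQuadForm v - B.reQuadForm w)
    (star v ⬝ᵥ A *ᵥ w + conj (star w ⬝ᵥ A *ᵥ v)) (star v ⬝ᵥ B *ᵥ w + conj (star w ⬝ᵥ B *ᵥ v))
  have hx : x ^ 2 ≤ 1 := by linarith [normSq_nonneg c]
  obtain ⟨z₁, z₂, h₁, h₂, hc⟩ := exists_normSq_eq_and_conj_mul_eq (a := 1 + x) (b := 1 - x) (c := c)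
    (by nlinarith) (by nlinarith) (by linarith)
  refine ⟨z₁ • v + z₂ • w, ?_, ?_⟩ <;> rw [reQuadForm_smul_add_smul, h₁, h₂, hc] <;> linarith

def jointReQuadCone (A B : Matrix n n ℂ) : PointedCone ℝ (ℝ × ℝ) where
  carrier := Set.range fun v => (A.reQuadForm v, B.reQuadForm v)
  add_mem' := by
    rintro _ _ ⟨v, rfl⟩ ⟨w, rfl⟩
    obtain ⟨u, hA, hB⟩ := exists_reQuadForm_eq_add A B v w
    exact ⟨u, by simp only [hA, hB, Prod.mk_add_mk]⟩
  zero_mem' := ⟨0, by simp [reQuadForm]⟩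
  smul_mem' := by
    rintro ⟨t, ht⟩ _ ⟨v, rfl⟩
    refine ⟨(Real.sqrt t : ℂ) • v, ?_⟩
    simp only [reQuadForm_smul, normSq_ofReal, Real.mul_self_sqrt ht]
    rfl

theorem exists_nonneg_posSemidef_add_smul {A B : Matrix n n ℂ} (hA : A.IsHermitian)
    (hB : B.IsHermitian) {v₀ : n → ℂ} (hv₀ : B.reQuadForm v₀ < 0)
    (h : ∀ v, B.reQuadForm v ≤ 0 → 0 ≤ A.reQuadForm v) :
    ∃ lam : ℝ, 0 ≤ lam ∧ (A + (lam : ℂ) • B).PosSemidef := by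
  obtain ⟨α, β, hα_nonneg, hβ, hαβ, hsep⟩ :=
    (jointReQuadCone A B).exists_nonneg_weights_of_forall_not_neg <| by
      rintro _ ⟨v, rfl⟩ ⟨hAv, hBv⟩
      exact hAv.not_ge (h v hBv.le)
  have hform : ∀ v, 0 ≤ α * A.reQuadForm v + β * B.reQuadForm v := fun v => hsep _ ⟨v, rfl⟩
  have hα : 0 < α := by
    refine hα_nonneg.lt_of_ne fun hα0 => ?_
    subst hα0
    nlinarith [hform v₀]
  refine ⟨β / α, div_nonneg hβ hα.le, ?_⟩
  refine (hA.add (hB.smul (conj_ofReal _))).posSemidef_of_reQuadForm_nonneg fun v => ?_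
  have hdiv : A.reQuadForm v + β / α * B.reQuadForm v =
      (α * A.reQuadForm v + β * B.reQuadForm v) / α := by
    field_simp
  rw [reQuadForm_add_smul, hdiv]
  exact div_nonneg (hform v) hα.le

def homogenizedObjective (G : Matrix n n ℂ) (h : n → ℂ) (γ : ℝ) :
    Matrix (n ⊕ Fin 1) (n ⊕ Fin 1) ℂ :=
  fromBlocks G (of fun i _ => (G *ᵥ h) i) (of fun _ j => star ((G *ᵥ h) j))
    (of fun _ _ => star h ⬝ᵥ G *ᵥ h - γ)

def homogenizedConstraint (Θ : Matrix n n ℂ) : Matrix (n ⊕ Fin 1) (n ⊕ Fin 1) ℂ :=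
  fromBlocks Θ 0 0 (-1)

theorem homogenizedObjective_isHermitian {G : Matrix n n ℂ} (hG : G.IsHermitian) (h : n → ℂ)
    (γ : ℝ) : (homogenizedObjective G h γ).IsHermitian := by
  refine hG.fromBlocks ?_ ?_
  · ext; simp
  · ext; simp [← star_dotProduct, hG.star_mulVec_dotProduct]

omit [Fintype n] in
theorem homogenizedConstraint_isHermitian {Θ : Matrix n n ℂ} (hΘ : Θ.IsHermitian) :
    (homogenizedConstraint Θ).IsHermitian :=
  hΘ.fromBlocks conjTranspose_zero (by simp [IsHermitian])

theorem reQuadForm_homogenizedObjective {G : Matrix n n ℂ} (hG : G.IsHermitian)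
    (h e : n → ℂ) (γ : ℝ) (t : ℂ) :
    (homogenizedObjective G h γ).reQuadForm (Sum.elim e fun _ => t) =
      G.reQuadForm (e + t • h) - γ * normSq t := by
  have hcol : (of fun i (_ : Fin 1) => (G *ᵥ h) i) *ᵥ (fun _ => t) = t • G *ᵥ h := by
    ext i; simp [mulVec, dotProduct, mul_comm]
  have hrow : (of fun (_ : Fin 1) j => star ((G *ᵥ h) j)) *ᵥ e = fun _ => star (G *ᵥ h) ⬝ᵥ e :=
    rfl
  have hcorner : (of fun (_ : Fin 1) (_ : Fin 1) => star h ⬝ᵥ G *ᵥ h - γ) *ᵥ (fun _ => t) =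
      fun _ => (star h ⬝ᵥ G *ᵥ h - γ) * t := by
    ext; simp [mulVec, dotProduct]
  have hscalar : ∀ g : Fin 1 → ℂ, (star fun _ : Fin 1 => t) ⬝ᵥ g = conj t * g 0 := by
    intro g; simp [dotProduct]
  have key : star (Sum.elim e fun _ => t) ⬝ᵥ homogenizedObjective G h γ *ᵥ
      Sum.elim e (fun _ => t) = star (e + t • h) ⬝ᵥ G *ᵥ (e + t • h) - γ * (conj t * t) := by
    simp only [homogenizedObjective, fromBlocks_mulVec, Function.star_sumElim,
      sumElim_dotProduct_sumElim, Sum.elim_comp_inl, Sum.elim_comp_inr]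
    rw [hcol, hrow, hcorner, hscalar, hG.star_mulVec_dotProduct]
    simp only [Pi.add_apply, star_add, star_smul, mulVec_add, mulVec_smul, dotProduct_add,
      add_dotProduct, dotProduct_smul, smul_dotProduct, smul_eq_mul, star_def]
    ring
  rw [reQuadForm, key, ← normSq_eq_conj_mul_self, sub_re, re_ofReal_mul]
  rfl

theorem reQuadForm_homogenizedConstraint (Θ : Matrix n n ℂ) (e : n → ℂ) (t : ℂ) :
    (homogenizedConstraint Θ).reQuadForm (Sum.elim e fun _ => t) = Θ.reQuadForm e - normSq t := by
  have key : star (Sum.elim e fun _ => t) ⬝ᵥ homogenizedConstraint Θ *ᵥ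
      Sum.elim e (fun _ => t) = star e ⬝ᵥ Θ *ᵥ e - conj t * t := by
    simp [homogenizedConstraint, dotProduct, mulVec, sub_eq_add_neg]
  rw [reQuadForm, key, ← normSq_eq_conj_mul_self, sub_re, ofReal_re]
  rfl

theorem reQuadForm_homogenizedObjective_nonneg {G Θ : Matrix n n ℂ} (hG : G.IsHermitian)
    (hΘ : Θ.PosDef) {h : n → ℂ} {γ : ℝ}
    (hrobust : ∀ e, Θ.reQuadForm e ≤ 1 → γ ≤ G.reQuadForm (h + e))
    (v : n ⊕ Fin 1 → ℂ) (hv : (homogenizedConstraint Θ).reQuadForm v ≤ 0) :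
    0 ≤ (homogenizedObjective G h γ).reQuadForm v := by
  obtain ⟨e, t, rfl⟩ : ∃ e t, v = Sum.elim e fun _ => t :=
    ⟨v ∘ Sum.inl, v (Sum.inr 0), by ext (i | i) <;> simp [Fin.fin_one_eq_zero]⟩
  rw [reQuadForm_homogenizedConstraint] at hv
  rw [reQuadForm_homogenizedObjective hG]
  rcases eq_or_ne t 0 with rfl | ht
  · obtain rfl : e = 0 := by
      by_contra he
      linarith [hΘ.reQuadForm_pos he, normSq_zero]
    simp [reQuadForm]
  · have hΘe : Θ.reQuadForm (t⁻¹ • e) ≤ 1 := by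
      rw [reQuadForm_smul, normSq_inv, inv_mul_le_iff₀ (normSq_pos.mpr ht)]
      linarith
    have hscale : e + t • h = t • (h + t⁻¹ • e) := by
      rw [smul_add, smul_inv_smul₀ ht, add_comm]
    rw [hscale, reQuadForm_smul]
    linarith [mul_le_mul_of_nonneg_left (hrobust _ hΘe) (normSq_nonneg t)]

theorem homogenizedObjective_add_smul_homogenizedConstraint (G Θ : Matrix n n ℂ) (h : n → ℂ)
    (γ lam : ℝ) :
    homogenizedObjective G h γ + (lam : ℂ) • homogenizedConstraint Θ =
      fromBlocks (G + (lam : ℂ) • Θ) (of fun i _ => (G *ᵥ h) i) (of fun _ j => star ((G *ᵥ h) j))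
        (of fun _ _ => star h ⬝ᵥ G *ᵥ h - γ - lam) := by
  simp only [homogenizedObjective, homogenizedConstraint, fromBlocks_smul, fromBlocks_add,
    smul_zero, add_zero]
  congr
  ext i j
  simp [sub_eq_add_neg, Subsingleton.elim i j]

end Matrix

theorem stmt_8 (N : ℕ) (G Θ : Matrix (Fin N) (Fin N) ℂ) (h : Fin N → ℂ)
    (γσsq : ℝ)
    (hG : G.IsHermitian) (hΘ : Θ.PosDef)
    (hrobust : ∀ e : Fin N → ℂ, (star e ⬝ᵥ Θ.mulVec e).re ≤ 1 →
      γσsq ≤ (star (h + e) ⬝ᵥ G.mulVec (h + e)).re) :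
    ∃ lam : ℝ, 0 ≤ lam ∧
      (Matrix.fromBlocks
        (G + (lam : ℂ) • Θ)
        (Matrix.of fun i (_ : Fin 1) => G.mulVec h i)
        (Matrix.of fun (_ : Fin 1) j => star (G.mulVec h j))
        (Matrix.of fun (_ : Fin 1) (_ : Fin 1) =>
          star h ⬝ᵥ G.mulVec h - (γσsq : ℝ) - (lam : ℝ))).PosSemidef := by
  have hslater : (homogenizedConstraint Θ).reQuadForm (Sum.elim 0 fun _ => 1) < 0 := by
    rw [reQuadForm_homogenizedConstraint]
    simp [reQuadForm]
  obtain ⟨lam, hlam, hpsd⟩ := exists_nonneg_posSemidef_add_smul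
    (homogenizedObjective_isHermitian hG h γσsq) (homogenizedConstraint_isHermitian hΘ.1) hslater
    (reQuadForm_homogenizedObjective_nonneg hG hΘ hrobust)
  refine ⟨lam, hlam, ?_⟩
  rwa [homogenizedObjective_add_smul_homogenizedConstraint] at hpsd
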